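/- Let X=(V,E,T) be a 2-dimensional (k0,k1)-regular (ε,μ)-cosystolic expander with |V| ≥ max{4/(1−2λ̃₂), 3/μ}, where λ̃₂ = λ̃₂(G₀(X)). If λ̃₂ < 1/2, then for every subset of edges ∅ ≠ F ⊊ E and every vertex v ∈ V, dist(F_v, Z¹(X)) = min{|F_v|, k₀ − |F_v|}. -/

import Mathlib

open Finset

/-- Symmetric-difference distance between two finite sets. -/
def sdist {α : Type} [DecidableEq α] (A B : Finset α) : ℕ :=
  (A \ B).card + (B \ A).card

/-- Distance from a finite set to a family of finite sets. -/
noncomputable def famDist {α : Type} [DecidableEq α] (A : Finset α) (Z : Set (Finset α)) : ℕ :=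
  sInf {d | ∃ z ∈ Z, sdist A z = d}

/-- `E` and `T` form the edges and triangles of a 2-dimensional simplicial complex on `V`. -/
def IsComplex {V : Type} [DecidableEq V] (E T : Finset (Finset V)) : Prop :=
  (∀ e ∈ E, e.card = 2) ∧ (∀ t ∈ T, t.card = 3) ∧
    ∀ t ∈ T, ∀ e, e ⊆ t → e.card = 2 → e ∈ E

/-- The complex is `(k₀, k₁)`-regular. -/
def IsRegularComplex {V : Type} [Fintype V] [DecidableEq V]
    (E T : Finset (Finset V)) (k₀ k₁ : ℕ) : Prop :=
  (∀ v : V, (E.filter (fun e => v ∈ e)).card = k₀) ∧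
    ∀ e ∈ E, (T.filter (fun t => e ⊆ t)).card = k₁

/-- Coboundary of a set of vertices: edges with exactly one endpoint in `S`. -/
def delta0 {V : Type} [DecidableEq V] (E : Finset (Finset V)) (S : Finset V) :
    Finset (Finset V) :=
  E.filter (fun e => (e ∩ S).card = 1)

/-- Coboundary of a set of edges: triangles containing an odd number of edges of `F`. -/
def delta1 {V : Type} [DecidableEq V] (T F : Finset (Finset V)) : Finset (Finset V) :=
  T.filter (fun t => Odd ((F.filter (fun e => e ⊆ t)).card))

/-- Local view of a vertex `v` with regard to a set of edges `F`. -/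
def localView {V : Type} [DecidableEq V] (F : Finset (Finset V)) (v : V) :
    Finset (Finset V) :=
  F.filter (fun e => v ∈ e)

/-- The 0-cocycles. -/
def Z0 {V : Type} [DecidableEq V] (E : Finset (Finset V)) : Set (Finset V) :=
  {S | delta0 E S = ∅}

/-- The 1-coboundaries: coboundaries of vertex sets (cuts). -/
def B1 {V : Type} [Fintype V] [DecidableEq V] (E : Finset (Finset V)) :
    Set (Finset (Finset V)) :=
  {B | ∃ S : Finset V, B = delta0 E S}

/-- The 1-cocycles: sets of edges with empty coboundary. -/
def Z1 {V : Type} [DecidableEq V] (E T : Finset (Finset V)) : Set (Finset (Finset V)) :=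
  {F | F ⊆ E ∧ delta1 T F = ∅}

/-- `(ε, μ)`-cosystolic expansion of a `(k₀, k₁)`-regular 2-dimensional complex. -/
def IsCosystolicExpander {V : Type} [Fintype V] [DecidableEq V]
    (E T : Finset (Finset V)) (k₀ k₁ : ℕ) (ε μ : ℝ) : Prop :=
  (∀ S : Finset V,
      (delta0 E S = ∅ →
        S = ∅ ∨ S = Finset.univ ∨ μ * (Fintype.card V : ℝ) ≤ (S.card : ℝ)) ∧
      (delta0 E S ≠ ∅ →
        ε * (k₀ : ℝ) * (famDist S (Z0 E) : ℝ) ≤ ((delta0 E S).card : ℝ))) ∧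
  (∀ F : Finset (Finset V), F ⊆ E →
      (delta1 T F = ∅ → F ∈ B1 E ∨ μ * (E.card : ℝ) ≤ (F.card : ℝ)) ∧
      (delta1 T F ≠ ∅ →
        ε * (k₁ : ℝ) * (famDist F (Z1 E T) : ℝ) ≤ ((delta1 T F).card : ℝ)))

/-- The underlying graph `G₀(X)` of the complex. -/
def G0 {V : Type} [DecidableEq V] (E : Finset (Finset V)) : SimpleGraph V where
  Adj u v := u ≠ v ∧ ({u, v} : Finset V) ∈ E
  symm := ⟨fun u v h => ⟨h.1.symm, by rw [Finset.pair_comm]; exact h.2⟩⟩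
  loopless := ⟨fun v h => h.1 rfl⟩

instance {V : Type} [DecidableEq V] (E : Finset (Finset V)) : DecidableRel (G0 E).Adj :=
  fun _ _ => inferInstanceAs (Decidable (_ ∧ _))

/-- The edge-graph `G₁(X)` of the complex: vertices are the edges of `X`, two edges
adjacent iff their union is a triangle. -/
def EdgeGraph {V : Type} [DecidableEq V] (E T : Finset (Finset V)) :
    SimpleGraph {e // e ∈ E} where
  Adj e f := e ≠ f ∧ (e.val ∪ f.val) ∈ T
  symm := ⟨fun e f h => ⟨h.1.symm, by rw [Finset.union_comm]; exact h.2⟩⟩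
  loopless := ⟨fun e h => h.1 rfl⟩

instance {V : Type} [DecidableEq V] (E T : Finset (Finset V)) :
    DecidableRel (EdgeGraph E T).Adj :=
  fun _ _ => inferInstanceAs (Decidable (_ ∧ _))

lemma adjMatrix_isHermitian {α : Type} [Fintype α] (G : SimpleGraph α)
    [DecidableRel G.Adj] : (SimpleGraph.adjMatrix ℝ G).IsHermitian := by
  refine Matrix.IsHermitian.ext fun i j => ?_
  simp [SimpleGraph.adjMatrix_apply, SimpleGraph.adj_comm]

/-- The eigenvalues of the adjacency matrix of `G`, sorted in ascending order. -/
noncomputable def eigsAsc {α : Type} [Fintype α] [DecidableEq α] (G : SimpleGraph α)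
    [DecidableRel G.Adj] : List ℝ :=
  Multiset.sort
    ((Finset.univ : Finset α).val.map (adjMatrix_isHermitian G).eigenvalues) (· ≤ ·)

/-- The normalized `i`-th largest adjacency eigenvalue (1-indexed) of a `k`-regular
graph `G`: `λ̃ᵢ = λᵢ / k`. -/
noncomputable def normEig {α : Type} [Fintype α] [DecidableEq α] (G : SimpleGraph α)
    [DecidableRel G.Adj] (k i : ℕ) : ℝ :=
  (eigsAsc G).getD (Fintype.card α - i) 0 / (k : ℝ)

/-- The number of edges of `G` with exactly one endpoint in `S` (counted via the
ordered pairs `(u, v)` with `u ∈ S`, `v ∉ S`, `u ~ v`). -/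
def cutEdges {α : Type} [Fintype α] [DecidableEq α] (G : SimpleGraph α)
    [DecidableRel G.Adj] (S : Finset α) : ℕ :=
  ((S ×ˢ Sᶜ).filter fun p => G.Adj p.1 p.2).card

/-- The normalized Cheeger constant of a `k`-regular graph. -/
noncomputable def normCheeger {α : Type} [Fintype α] [DecidableEq α] (G : SimpleGraph α)
    [DecidableRel G.Adj] (k : ℕ) : ℝ :=
  sInf {x : ℝ | ∃ S : Finset α, 0 < S.card ∧ (S.card : ℝ) ≤ (Fintype.card α : ℝ) / 2 ∧
    x = (cutEdges G S : ℝ) / ((k : ℝ) * (S.card : ℝ))}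

/-- The random walk on the `d`-regular graph `G` is `a`-rapidly mixing: from any initial
distribution, after `i` steps of the walk (with transition matrix `(1/d) • A(G)`),
the ℓ₂ distance to the uniform distribution is at most `a ^ i`. -/
def WalkRapidMixing {α : Type} [Fintype α] [DecidableEq α] (G : SimpleGraph α)
    [DecidableRel G.Adj] (d : ℕ) (a : ℝ) : Prop :=
  ∀ p₀ : α → ℝ, (∀ x, 0 ≤ p₀ x) → (∑ x, p₀ x = 1) → ∀ i : ℕ,
    Real.sqrt (∑ x, ((((d : ℝ)⁻¹ • SimpleGraph.adjMatrix ℝ G) ^ i).mulVec p₀ x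
      - (Fintype.card α : ℝ)⁻¹) ^ 2) ≤ a ^ i

/-!
A nonempty cocycle `z` has at least `k₀` edges. If `z` is a coboundary `δ(S)`, this is a
statement about the cut `E(S, S̄)` of the `k₀`-regular graph `G₀(X)`: when one side is a single
vertex the cut is its star, of size `k₀`; otherwise both sides have at least two vertices and the
spectral bound `(k₀ - λ₂) |S| |S̄| ≤ |V| |E(S, S̄)|` (the Rayleigh quotient of `n·1_S - |S|`, which
is orthogonal to the constants) together with `|V| (1 - 2 λ̃₂) ≥ 4` gives `|E(S, S̄)| ≥ k₀`.
If `z` is not a coboundary, cosystolic expansion gives `|z| ≥ μ|E| = μ |V| k₀ / 2 ≥ 3 k₀ / 2`.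

Consequently every cocycle `z` is either empty, at distance `|F_v|` from `F_v`, or at distance at
least `|z| - |F_v| ≥ k₀ - |F_v|`; both bounds are attained, by `∅` and by the star of `v`,
which is the coboundary `δ({v})`.
-/

open Matrix

open scoped RealInnerProductSpace in
theorem LinearMap.IsSymmetric.inner_apply_le_eigenvalues_one_mul
    {E : Type*} [NormedAddCommGroup E] [InnerProductSpace ℝ E] [FiniteDimensional ℝ E]
    {T : E →ₗ[ℝ] E} (hT : T.IsSymmetric) {n : ℕ} (hn : Module.finrank ℝ E = n) (h1 : 1 < n)
    {u : E} {k : ℝ} (hu : u ≠ 0) (hTu : T u = k • u) (hk : hT.eigenvalues hn ⟨1, h1⟩ < k)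
    {x : E} (hx : ⟪x, u⟫ = 0) :
    ⟪T x, x⟫ ≤ hT.eigenvalues hn ⟨1, h1⟩ * ‖x‖ ^ 2 := by
  set b := hT.eigenvectorBasis hn
  set lam := hT.eigenvalues hn
  set top : Fin n := ⟨0, by omega⟩
  have hTb : ∀ i, T (b i) = lam i • b i := hT.apply_eigenvectorBasis hn
  have hle : ∀ i, i ≠ top → lam i ≤ lam ⟨1, h1⟩ := fun i hi =>
    hT.eigenvalues_antitone hn <|
      Fin.mk_le_of_le_val (Nat.one_le_iff_ne_zero.mpr (Fin.val_ne_of_ne hi))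
  -- `u` is orthogonal to every eigenvector whose eigenvalue is `≤ λ₁ < k`, so `u ∥ b top`.
  have hbu : ∀ i, i ≠ top → ⟪b i, u⟫ = 0 := by
    intro i hi
    have : lam i * ⟪b i, u⟫ = k * ⟪b i, u⟫ := by
      rw [← real_inner_smul_left, ← hTb, hT, hTu, real_inner_smul_right]
    exact (mul_eq_mul_right_iff.mp this).resolve_left ((hle i hi).trans_lt hk).ne
  have hbu_top : ⟪b top, u⟫ ≠ 0 := by
    intro h
    apply hu
    rw [← b.sum_repr' u]
    refine Finset.sum_eq_zero fun i _ => ?_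
    rcases eq_or_ne i top with rfl | hi
    · rw [h, zero_smul]
    · rw [hbu i hi, zero_smul]
  have hbx_top : ⟪b top, x⟫ = 0 := by
    rw [← b.sum_inner_mul_inner x u, Finset.sum_eq_single top
      (fun i _ hi => by rw [hbu i hi, mul_zero]) (by simp), real_inner_comm] at hx
    exact (mul_eq_zero.mp hx).resolve_right hbu_top
  calc ⟪T x, x⟫ = ∑ i, lam i * ⟪b i, x⟫ ^ 2 := by
        rw [← b.sum_inner_mul_inner]
        refine Finset.sum_congr rfl fun i _ => ?_
        rw [hT, hTb, real_inner_smul_right, real_inner_comm]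
        ring
    _ ≤ ∑ i, lam ⟨1, h1⟩ * ⟪b i, x⟫ ^ 2 := Finset.sum_le_sum fun i _ => by
        rcases eq_or_ne i top with rfl | hi
        · simp [hbx_top]
        · exact mul_le_mul_of_nonneg_right (hle i hi) (sq_nonneg _)
    _ = lam ⟨1, h1⟩ * ‖x‖ ^ 2 := by
        rw [← Finset.mul_sum, ← real_inner_self_eq_norm_sq, ← b.sum_inner_mul_inner x x]
        simp_rw [real_inner_comm x, sq]

lemma eigsAsc_eq_reverse {α : Type} [Fintype α] [DecidableEq α] (G : SimpleGraph α)
    [DecidableRel G.Adj] :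
    eigsAsc G = (List.ofFn (adjMatrix_isHermitian G).eigenvalues₀).reverse := by
  have hmap : univ.val.map (adjMatrix_isHermitian G).eigenvalues =
      ((List.ofFn (adjMatrix_isHermitian G).eigenvalues₀).reverse : Multiset ℝ) := by
    rw [Multiset.coe_reverse, ← Fin.univ_val_map]
    exact (Multiset.map_map _ _ _).symm.trans (by rw [Multiset.map_univ_val_equiv])
  rw [eigsAsc, hmap, Multiset.coe_sort]
  apply List.mergeSort_of_pairwise
  simp only [decide_eq_true_eq, List.pairwise_reverse]
  exact (adjMatrix_isHermitian G).eigenvalues₀_antitone.sortedGE_ofFn.pairwise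

lemma sum_ite_mem_const {α : Type} [Fintype α] [DecidableEq α] (S : Finset α) (a b : ℝ) :
    ∑ i, (if i ∈ S then a else b) = #S * a + #Sᶜ * b := by
  simp [sum_ite, filter_not, compl_eq_univ_sdiff]

lemma le_of_spectral_cut_bound {k l s t c : ℝ} (hk : 0 ≤ k) (hs : 2 ≤ s) (ht : 2 ≤ t)
    (hcut : (k - l) * s * t ≤ (s + t) * c) (hgap : 4 * k ≤ (s + t) * (k - 2 * l)) : k ≤ c := by
  have hkl : k * (s + t + 4) ≤ 2 * (s + t) * (k - l) := by linarith
  have hst : 2 * (s + t - 2) ≤ s * t := by nlinarith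
  have h1 := mul_le_mul_of_nonneg_right hkl (by positivity : 0 ≤ s * t)
  have h2 := mul_le_mul_of_nonneg_left hcut (by positivity : 0 ≤ 2 * (s + t))
  have h3 := mul_le_mul_of_nonneg_left hst (by positivity : 0 ≤ k * (s + t + 4))
  have h4 : k * (s + t) ^ 2 ≤ c * (s + t) ^ 2 := by nlinarith
  exact le_of_mul_le_mul_right h4 (by positivity)

namespace SimpleGraph

variable {α : Type} [Fintype α] [DecidableEq α] {G : SimpleGraph α} [DecidableRel G.Adj]

lemma normEig_two_eq {k : ℕ} (h1 : 1 < Fintype.card α) :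
    normEig G k 2 = (adjMatrix_isHermitian G).eigenvalues₀ ⟨1, h1⟩ / k := by
  rw [normEig, eigsAsc_eq_reverse, List.getD_eq_getElem _ _ (by simp; omega),
    List.getElem_reverse, List.getElem_ofFn]
  congr 3
  simp
  omega

lemma cutEdges_compl (S : Finset α) : cutEdges G Sᶜ = cutEdges G S :=
  card_equiv (Equiv.prodComm α α) fun p => by
    simp only [mem_filter, mem_product, mem_compl, compl_compl, Equiv.prodComm_apply,
      Prod.fst_swap, Prod.snd_swap, G.adj_comm p.1]
    tauto

lemma cutEdges_singleton (v : α) : cutEdges G {v} = G.degree v := by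
  rw [← card_neighborFinset_eq_degree]
  refine card_nbij' Prod.snd (fun w => (v, w)) ?_ ?_ ?_ ?_ <;>
    intro p <;> simp +contextual [Prod.ext_iff]
  exact Adj.ne'

lemma cutEdges_eq_sum (S : Finset α) :
    (cutEdges G S : ℝ) = ∑ i, ∑ j, if G.Adj i j ∧ i ∈ S ∧ j ∉ S then 1 else 0 := by
  have : {p ∈ S ×ˢ Sᶜ | G.Adj p.1 p.2} =
      {p ∈ (univ : Finset (α × α)) | G.Adj p.1 p.2 ∧ p.1 ∈ S ∧ p.2 ∉ S} := by
    ext; simp [and_comm]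
  rw [cutEdges, this, card_filter, Nat.cast_sum, Fintype.sum_prod_type]
  simp

lemma sum_adj_sq_sub_ite (S : Finset α) (a b : ℝ) :
    (∑ i, ∑ j, if G.Adj i j then
        ((if i ∈ S then a else b) - (if j ∈ S then a else b)) ^ 2 else 0) =
      2 * (a - b) ^ 2 * cutEdges G S := by
  have hpt : ∀ i j, (if G.Adj i j then
        ((if i ∈ S then a else b) - (if j ∈ S then a else b)) ^ 2 else 0) =
      (a - b) ^ 2 * ((if G.Adj i j ∧ i ∈ S ∧ j ∉ S then 1 else 0) +
        (if G.Adj i j ∧ i ∈ Sᶜ ∧ j ∉ Sᶜ then 1 else 0)) := by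
    intro i j
    by_cases hi : i ∈ S <;> by_cases hj : j ∈ S <;> simp [hi, hj, sub_sq_comm b a]
  simp_rw [hpt, ← mul_sum, sum_add_distrib, ← cutEdges_eq_sum, cutEdges_compl]
  ring

namespace IsRegularOfDegree

variable {k : ℕ} (hG : G.IsRegularOfDegree k)
include hG

lemma dotProduct_adjMatrix_mulVec (x : α → ℝ) :
    x ⬝ᵥ (G.adjMatrix ℝ *ᵥ x) =
      k * (x ⬝ᵥ x) - (∑ i, ∑ j, if G.Adj i j then (x i - x j) ^ 2 else 0) / 2 := by
  rw [← lapMatrix_toLinearMap₂', toLinearMap₂'_apply', lapMatrix, sub_mulVec, dotProduct_sub,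
    dotProduct_mulVec_degMatrix]
  simp [hG _, dotProduct, mul_sum, mul_assoc]

theorem dotProduct_adjMatrix_mulVec_le (h1 : 1 < Fintype.card α)
    (hk : (adjMatrix_isHermitian G).eigenvalues₀ ⟨1, h1⟩ < k) {x : α → ℝ} (hx : ∑ i, x i = 0) :
    x ⬝ᵥ (G.adjMatrix ℝ *ᵥ x) ≤ (adjMatrix_isHermitian G).eigenvalues₀ ⟨1, h1⟩ * (x ⬝ᵥ x) := by
  have hT := isSymmetric_toEuclideanLin_iff.mpr (adjMatrix_isHermitian G)
  have hone : (WithLp.toLp 2 (fun _ => (1 : ℝ)) : EuclideanSpace ℝ α) ≠ 0 := by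
    obtain ⟨i⟩ : Nonempty α := Fintype.card_pos_iff.mp (by omega)
    intro h
    simpa using congrArg (fun y : EuclideanSpace ℝ α => y i) h
  have key := hT.inner_apply_le_eigenvalues_one_mul finrank_euclideanSpace h1 hone (k := k) ?_ hk
    (x := WithLp.toLp 2 x) ?_
  · rw [← real_inner_self_eq_norm_sq] at key
    convert key using 1
    · simp [EuclideanSpace.inner_toLp_toLp]
    · rw [EuclideanSpace.inner_toLp_toLp]
      rfl
  · ext i
    simp [hG i]
  · simpa [EuclideanSpace.inner_toLp_toLp, dotProduct] using hx

theorem sub_mul_card_mul_card_compl_le (h1 : 1 < Fintype.card α)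
    (hk : (adjMatrix_isHermitian G).eigenvalues₀ ⟨1, h1⟩ < k) (S : Finset α) :
    (k - (adjMatrix_isHermitian G).eigenvalues₀ ⟨1, h1⟩) * #S * #Sᶜ ≤
      Fintype.card α * cutEdges G S := by
  set s : ℝ := ((#S : ℕ) : ℝ)
  set t : ℝ := ((#Sᶜ : ℕ) : ℝ)
  have hn : (Fintype.card α : ℝ) = s + t := by
    rw [← card_add_card_compl S]; push_cast; rfl
  set x : α → ℝ := fun i => if i ∈ S then t else -s
  have hsum : ∑ i, x i = 0 := by
    simp only [x, sum_ite_mem_const]; ring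
  have hxx : x ⬝ᵥ x = s * t * (s + t) := by
    have : ∀ i, x i * x i = if i ∈ S then t * t else s * s := fun i => by
      by_cases hi : i ∈ S <;> simp [x, hi]
    simp only [dotProduct, this, sum_ite_mem_const]
    ring
  have hform := hG.dotProduct_adjMatrix_mulVec x
  rw [sum_adj_sq_sub_ite, hxx] at hform
  have hle := hG.dotProduct_adjMatrix_mulVec_le h1 hk hsum
  rw [hform, hxx, sub_neg_eq_add, ← hn] at hle
  rw [hn] at hle ⊢
  have hpos : 0 < s + t := by rw [← hn]; exact_mod_cast (by omega : 0 < Fintype.card α)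
  nlinarith

theorem le_cutEdges (hlam : normEig G k 2 < 1 / 2)
    (hV : 4 / (1 - 2 * normEig G k 2) ≤ Fintype.card α)
    {S : Finset α} (hS : S.Nonempty) (hSc : Sᶜ.Nonempty) : k ≤ cutEdges G S := by
  rcases Nat.eq_zero_or_pos k with rfl | hk0
  · exact Nat.zero_le _
  have hn : #S + #Sᶜ = Fintype.card α := card_add_card_compl S
  have h1 : 1 < Fintype.card α := by have := hS.card_pos; have := hSc.card_pos; omega
  -- The spectral bound is too weak for a singleton side, whose cut is just a star.
  rcases (by have := hS.card_pos; have := hSc.card_pos; omega :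
      #S = 1 ∨ #Sᶜ = 1 ∨ (2 ≤ #S ∧ 2 ≤ #Sᶜ)) with hs | hs | ⟨hs, ht⟩
  · obtain ⟨u, rfl⟩ := card_eq_one.mp hs
    rw [cutEdges_singleton, hG u]
  · obtain ⟨u, hu⟩ := card_eq_one.mp hs
    rw [← cutEdges_compl, hu, cutEdges_singleton, hG u]
  rw [normEig_two_eq h1] at hlam hV
  set l := (adjMatrix_isHermitian G).eigenvalues₀ ⟨1, h1⟩
  have hk : (0 : ℝ) < k := by exact_mod_cast hk0
  have hlk : l < k := by
    rw [div_lt_iff₀ hk] at hlam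
    linarith
  have hgap : 4 * (k : ℝ) ≤ Fintype.card α * (k - 2 * l) := by
    rw [div_le_iff₀ (by linarith)] at hV
    have : (1 - 2 * (l / k)) * k = k - 2 * l := by field_simp
    nlinarith
  have hcut := hG.sub_mul_card_mul_card_compl_le h1 hlk S
  have hnR : (Fintype.card α : ℝ) = #S + #Sᶜ := by exact_mod_cast hn.symm
  rw [hnR] at hcut hgap
  exact_mod_cast le_of_spectral_cut_bound hk.le (by exact_mod_cast hs) (by exact_mod_cast ht)
    hcut hgap

end IsRegularOfDegree

end SimpleGraph

section Complex

variable {V : Type} [DecidableEq V] {E T : Finset (Finset V)}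

lemma card_filter_card_inter_eq_one [Fintype V] {P : Finset (Finset V)}
    (hP : ∀ e ∈ P, #e = 2) (S : Finset V) :
    #{e ∈ P | #(e ∩ S) = 1} = #{p ∈ S ×ˢ Sᶜ | {p.1, p.2} ∈ P} := by
  symm
  refine card_bij (fun p _ => {p.1, p.2}) ?_ ?_ ?_
  · rintro ⟨a, b⟩ hp
    simp only [mem_filter, mem_product, mem_compl] at hp ⊢
    refine ⟨hp.2, card_eq_one.mpr ⟨a, ?_⟩⟩
    ext x
    simp only [mem_inter, mem_insert, mem_singleton]
    constructor
    · rintro ⟨rfl | rfl, hx⟩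
      · rfl
      · exact absurd hx hp.1.2
    · rintro rfl
      exact ⟨Or.inl rfl, hp.1.1⟩
  · rintro ⟨a, b⟩ hp ⟨a', b'⟩ hp' h
    simp only [mem_filter, mem_product, mem_compl] at hp hp' h
    have ha : a ∈ ({a', b'} : Finset V) := h ▸ mem_insert_self a {b}
    have hb : b ∈ ({a', b'} : Finset V) := h ▸ mem_insert_of_mem (mem_singleton_self b)
    simp only [mem_insert, mem_singleton] at ha hb
    grind
  · intro e he
    simp only [mem_filter] at he
    obtain ⟨a, ha⟩ := card_eq_one.mp he.2
    obtain ⟨b, hb⟩ : ∃ b, e \ S = {b} := card_eq_one.mp (by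
      have := card_sdiff_add_card_inter e S
      rw [hP e he.1, he.2] at this
      omega)
    have haS : a ∈ S := (mem_inter.mp (ha ▸ mem_singleton_self a)).2
    have hbS : b ∉ S := (mem_sdiff.mp (hb ▸ mem_singleton_self b)).2
    have hab : e = {a, b} := by
      rw [← sdiff_union_inter e S, hb, ha, union_comm, ← insert_eq]
    subst hab
    exact ⟨(a, b), by simpa [haS, hbS] using he.1, rfl⟩

lemma cutEdges_G0 [Fintype V] (hE : ∀ e ∈ E, #e = 2) (S : Finset V) :
    cutEdges (G0 E) S = #(delta0 E S) := by
  rw [delta0, card_filter_card_inter_eq_one hE, cutEdges]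
  congr 1
  refine filter_congr fun p hp => ?_
  simp only [mem_product, mem_compl] at hp
  exact and_iff_right fun h => hp.2 (h ▸ hp.1)

lemma delta0_singleton (v : V) : delta0 E {v} = {e ∈ E | v ∈ e} := by
  rw [delta0]
  refine filter_congr fun e _ => ?_
  rw [inter_singleton]
  split_ifs with h <;> simp [h]

lemma G0_isRegularOfDegree [Fintype V] {k : ℕ} (hE : ∀ e ∈ E, #e = 2)
    (hreg : ∀ v, #{e ∈ E | v ∈ e} = k) : (G0 E).IsRegularOfDegree k := fun v => by
  rw [← SimpleGraph.cutEdges_singleton, cutEdges_G0 hE, delta0_singleton, hreg]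

lemma empty_mem_Z1 : ∅ ∈ Z1 E T :=
  ⟨empty_subset E, by simp [delta1]⟩

lemma delta0_mem_Z1 [Fintype V] (hX : IsComplex E T) (S : Finset V) : delta0 E S ∈ Z1 E T := by
  refine ⟨filter_subset _ _, filter_eq_empty_iff.mpr fun t ht => ?_⟩
  -- The edges of `t` crossing the cut are the pairs in `(t ∩ S) × (t \ S)`, and `a (3 - a)`
  -- is even.
  have hcount : {e ∈ delta0 E S | e ⊆ t} = {e ∈ {e ∈ E | e ⊆ t} | #(e ∩ S) = 1} := by
    simp only [delta0, filter_filter, and_comm]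
  have hprod : {p ∈ S ×ˢ Sᶜ | {p.1, p.2} ∈ {e ∈ E | e ⊆ t}} = (t ∩ S) ×ˢ (t \ S) := by
    ext ⟨a, b⟩
    simp only [mem_filter, mem_product, mem_compl, mem_inter, mem_sdiff, insert_subset_iff,
      singleton_subset_iff]
    constructor
    · rintro ⟨⟨ha, hb⟩, -, hat, hbt⟩
      exact ⟨⟨hat, ha⟩, hbt, hb⟩
    · rintro ⟨⟨hat, ha⟩, hbt, hb⟩
      refine ⟨⟨ha, hb⟩, hX.2.2 t ht _ ?_ (card_pair fun h => hb (h ▸ ha)), hat, hbt⟩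
      exact insert_subset_iff.mpr ⟨hat, singleton_subset_iff.mpr hbt⟩
  rw [hcount, card_filter_card_inter_eq_one (fun e he => hX.1 e (mem_filter.mp he).1), hprod,
    card_product, Nat.not_odd_iff_even]
  have h3 : #(t ∩ S) + #(t \ S) = 3 := by
    rw [add_comm, card_sdiff_add_card_inter, hX.2.1 t ht]
  have : #(t ∩ S) ≤ 3 := by omega
  interval_cases h : #(t ∩ S) <;> simp [show #(t \ S) = 3 - #(t ∩ S) by omega, h]

lemma IsRegularComplex.card_mul_eq_two_mul_card [Fintype V] {k₀ k₁ : ℕ}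
    (hreg : IsRegularComplex E T k₀ k₁) (hX : IsComplex E T) :
    Fintype.card V * k₀ = 2 * #E := by
  rw [← sum_card hreg.1, sum_congr rfl hX.1, sum_const, smul_eq_mul, mul_comm]

lemma IsCosystolicExpander.le_card_of_mem_Z1 [Fintype V] {k₀ k₁ : ℕ} {ε μ : ℝ}
    (hexp : IsCosystolicExpander E T k₀ k₁ ε μ) (hμ : 0 < μ) (hX : IsComplex E T)
    (hreg : IsRegularComplex E T k₀ k₁) (hVμ : 3 / μ ≤ Fintype.card V)
    (hlam : normEig (G0 E) k₀ 2 < 1 / 2) (hV : 4 / (1 - 2 * normEig (G0 E) k₀ 2) ≤ Fintype.card V)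
    {z : Finset (Finset V)} (hz : z ∈ Z1 E T) (hz0 : z ≠ ∅) : k₀ ≤ #z := by
  rcases (hexp.2 z hz.1).1 hz.2 with ⟨S, rfl⟩ | hbig
  · have hS : S.Nonempty := nonempty_iff_ne_empty.mpr fun h => hz0 (by simp [h, delta0])
    have hSc : Sᶜ.Nonempty := nonempty_iff_ne_empty.mpr fun h => hz0 <| by
      rw [compl_eq_empty_iff] at h
      simp +contextual [h, delta0, hX.1 _]
    rw [← cutEdges_G0 hX.1]
    exact (G0_isRegularOfDegree hX.1 hreg.1).le_cutEdges hlam hV hS hSc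
  · have hEcard : (Fintype.card V : ℝ) * k₀ = 2 * #E := by
      exact_mod_cast hreg.card_mul_eq_two_mul_card hX
    rw [div_le_iff₀ hμ] at hVμ
    have : (3 * k₀ : ℝ) ≤ 2 * #z := by nlinarith [(Nat.cast_nonneg k₀ : (0 : ℝ) ≤ k₀)]
    exact_mod_cast (by linarith : (k₀ : ℝ) ≤ #z)

lemma sdist_empty_right (A : Finset V) : sdist A ∅ = #A := by
  simp [sdist]

lemma sdist_of_subset {A B : Finset V} (h : A ⊆ B) : sdist A B = #B - #A := by
  rw [sdist, sdiff_eq_empty_iff_subset.mpr h, card_empty, zero_add, card_sdiff_of_subset h]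

lemma card_sub_card_le_sdist (A B : Finset V) : #B - #A ≤ sdist A B :=
  (le_card_sdiff A B).trans (Nat.le_add_left _ _)

lemma famDist_le {A z : Finset V} {Z : Set (Finset V)} (hz : z ∈ Z) : famDist A Z ≤ sdist A z :=
  Nat.sInf_le ⟨z, hz, rfl⟩

lemma le_famDist {A : Finset V} {Z : Set (Finset V)} {d : ℕ} (hZ : Z.Nonempty)
    (h : ∀ z ∈ Z, d ≤ sdist A z) : d ≤ famDist A Z := by
  obtain ⟨z, hz⟩ := hZ
  refine le_csInf ⟨_, z, hz, rfl⟩ ?_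
  rintro _ ⟨z, hz, rfl⟩
  exact h z hz

end Complex

theorem dist_of_local_view_from_cocycles_general
    {V : Type} [Fintype V] [DecidableEq V] (E T : Finset (Finset V))
    (k₀ k₁ : ℕ) (ε μ : ℝ) (hμ : 0 < μ)
    (hX : IsComplex E T) (hreg : IsRegularComplex E T k₀ k₁)
    (hexp : IsCosystolicExpander E T k₀ k₁ ε μ)
    (hV : max (4 / (1 - 2 * normEig (G0 E) k₀ 2)) (3 / μ) ≤ (Fintype.card V : ℝ))
    (hlam : normEig (G0 E) k₀ 2 < 1 / 2)
    (F : Finset (Finset V)) (hF : F ⊆ E) (v : V) :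
    famDist (localView F v) (Z1 E T) =
      min (localView F v).card (k₀ - (localView F v).card) := by
  set A := localView F v
  have hA : A ⊆ delta0 E {v} := delta0_singleton (E := E) v ▸ filter_subset_filter _ hF
  have hstar : #(delta0 E {v}) = k₀ := delta0_singleton (E := E) v ▸ hreg.1 v
  rw [max_le_iff] at hV
  have hZ1 : ∀ z ∈ Z1 E T, z ≠ ∅ → k₀ ≤ #z :=
    fun z hz => hexp.le_card_of_mem_Z1 hμ hX hreg hV.2 hlam hV.1 hz
  refine le_antisymm (le_min ?_ ?_) (le_famDist ⟨∅, empty_mem_Z1⟩ fun z hz => ?_)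
  · exact (famDist_le empty_mem_Z1).trans_eq (sdist_empty_right A)
  · exact (famDist_le (delta0_mem_Z1 hX {v})).trans_eq (by rw [sdist_of_subset hA, hstar])
  · obtain rfl | hz0 := eq_or_ne z ∅
    · exact (min_le_left _ _).trans_eq (sdist_empty_right A).symm
    · have := card_sub_card_le_sdist A z
      have := hZ1 z hz hz0
      exact (min_le_right _ _).trans (by omega)

theorem dist_of_local_view_from_cocycles
    {V : Type} [Fintype V] [DecidableEq V] (E T : Finset (Finset V))
    (k₀ k₁ : ℕ) (ε μ : ℝ) (hε : 0 < ε) (hμ : 0 < μ)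
    (hX : IsComplex E T) (hreg : IsRegularComplex E T k₀ k₁)
    (hexp : IsCosystolicExpander E T k₀ k₁ ε μ)
    (hV : max (4 / (1 - 2 * normEig (G0 E) k₀ 2)) (3 / μ) ≤ (Fintype.card V : ℝ))
    (hlam : normEig (G0 E) k₀ 2 < 1 / 2)
    (F : Finset (Finset V)) (hF : F ⊆ E) (hF0 : F ≠ ∅) (hFE : F ≠ E) (v : V) :
    famDist (localView F v) (Z1 E T) =
      min (localView F v).card (k₀ - (localView F v).card) :=
  dist_of_local_view_from_cocycles_general E T k₀ k₁ ε μ hμ hX hreg hexp hV hlam F hF v
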